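/- arXiv:2502.00186 — 5 statements merged into one kernel-verified Lean document; each statement's English description precedes it below -/
import Mathlib

section
/- Let A be an n×n real matrix with nonnegative entries such that A^k has zero diagonal for every k ∈ {1,…,n}. Then 1 is not an eigenvalue of A, i.e., I - A is invertible. -/
/-!
Read `A` as the digraph with an edge `i → j` whenever `0 < A i j`; for nonnegative `A`,
`(A ^ k) i j > 0` exactly when there is a walk of length `k` from `i` to `j`. A walk of length
`n` visits `n + 1` vertices, so it repeats one and contains a closed walk of length between `1`
and `n`, which would make a diagonal entry of some `A ^ k`, `1 ≤ k ≤ n`, positive. Hence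
`A ^ n = 0`, so `1 - A` is a unit with inverse `1 + A + ⋯ + A ^ (n - 1)`.
-/

namespace Quiver.Path

variable {V : Type*} [Quiver V]

theorem exists_cycle_of_not_nodup_vertices {a b : V} (p : Path a b) (hp : ¬ p.vertices.Nodup) :
    ∃ (v : V) (c : Path v v), 0 < c.length ∧ c.length ≤ p.length := by
  induction p with
  | nil => simp at hp
  | @cons b c p e ih =>
    by_cases hnodup : p.vertices.Nodup
    · have hc : c ∈ p.vertices := by
        by_contra hc
        exact hp (by simpa [List.nodup_append] using ⟨hnodup, fun x hx h ↦ hc (h ▸ hx)⟩)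
      obtain ⟨p₁, p₂, rfl⟩ := p.exists_eq_comp_of_mem_vertices hc
      exact ⟨c, p₂.cons e, by simp, by simp⟩
    · obtain ⟨v, c, hpos, hle⟩ := ih hnodup
      exact ⟨v, c, hpos, hle.trans (by simp)⟩

theorem exists_cycle_of_card_le_length [Fintype V] {a b : V} (p : Path a b)
    (hp : Fintype.card V ≤ p.length) :
    ∃ (v : V) (c : Path v v), 0 < c.length ∧ c.length ≤ p.length :=
  p.exists_cycle_of_not_nodup_vertices fun hnodup ↦ by
    simpa using (hnodup.length_le_card.trans hp)

end Quiver.Path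

namespace Matrix

variable {ι R : Type*} [Fintype ι] [DecidableEq ι] [Ring R] [LinearOrder R]
  [IsStrictOrderedRing R]

theorem pow_card_eq_zero_of_diag_pow_eq_zero {A : Matrix ι ι R} (hA : ∀ i j, 0 ≤ A i j)
    (hdiag : ∀ k ∈ Finset.Icc 1 (Fintype.card ι), ∀ i, (A ^ k) i i = 0) :
    A ^ Fintype.card ι = 0 := by
  let := toQuiver A
  ext i j
  refine le_antisymm (not_lt.mp fun hpos ↦ ?_) (pow_apply_nonneg hA _ i j)
  obtain ⟨⟨p, hp⟩⟩ := (pow_apply_pos_iff_nonempty_path hA _ i j).mp hpos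
  obtain ⟨v, c, hc_pos, hc_le⟩ := p.exists_cycle_of_card_le_length hp.ge
  have hcycle := (pow_apply_pos_iff_nonempty_path hA c.length v v).mpr ⟨⟨c, rfl⟩⟩
  exact hcycle.ne' (hdiag _ (Finset.mem_Icc.mpr ⟨hc_pos, hp ▸ hc_le⟩) v)

end Matrix

theorem stmt_1 (n : ℕ) (A : Matrix (Fin n) (Fin n) ℝ)
    (hpos : ∀ i j, 0 ≤ A i j)
    (hdiag : ∀ k ∈ Finset.Icc 1 n, ∀ i, (A ^ k) i i = 0) :
    (¬ ∃ x : Fin n → ℝ, x ≠ 0 ∧ A.mulVec x = x) ∧ IsUnit (1 - A) := by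
  have hnil : IsNilpotent A :=
    ⟨n, by simpa using Matrix.pow_card_eq_zero_of_diag_pow_eq_zero hpos (by simpa using hdiag)⟩
  have hunit : IsUnit (1 - A) := hnil.isUnit_one_sub
  refine ⟨fun ⟨x, hx, hAx⟩ ↦ hx ?_, hunit⟩
  apply Matrix.mulVec_injective_iff_isUnit.mpr hunit
  simp [Matrix.sub_mulVec, hAx]
end

section
/- Let A be an n×n real matrix with nonnegative entries such that A^k has zero diagonal for every k ∈ {1,…,n}. Then A is nilpotent; in particular A^n = 0. -/
/-- Powers of an entrywise-nonnegative matrix are entrywise nonnegative. -/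
lemma pow_entry_nonneg {n : ℕ} (A : Matrix (Fin n) (Fin n) ℝ)
    (hpos : ∀ i j, 0 ≤ A i j) : ∀ k i j, 0 ≤ (A ^ k) i j := by
  intro k
  induction k with
  | zero =>
    intro i j
    simp [Matrix.one_apply]
    split <;> norm_num
  | succ k ih =>
    intro i j
    rw [pow_succ, Matrix.mul_apply]
    exact Finset.sum_nonneg fun l _ => mul_nonneg (ih i l) (hpos l j)

/-- From a nonzero entry of `A ^ k` one can extract a walk with nonzero edges. -/
lemma exists_walk {n : ℕ} (A : Matrix (Fin n) (Fin n) ℝ) :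
    ∀ k i j, (A ^ k) i j ≠ 0 →
      ∃ f : ℕ → Fin n, f 0 = i ∧ f k = j ∧ ∀ m < k, A (f m) (f (m + 1)) ≠ 0 := by
  intro k
  induction k with
  | zero =>
    intro i j h
    simp only [pow_zero, Matrix.one_apply, ne_eq, ite_eq_right_iff, not_forall] at h
    exact ⟨fun _ => i, rfl, h.1 ▸ rfl, fun m hm => absurd hm (Nat.not_lt_zero m)⟩
  | succ k ih =>
    intro i j h
    rw [pow_succ, Matrix.mul_apply] at h
    obtain ⟨l, -, hl⟩ := Finset.exists_ne_zero_of_sum_ne_zero h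
    have h1 : (A ^ k) i l ≠ 0 := fun h0 => hl (by rw [h0, zero_mul])
    have h2 : A l j ≠ 0 := fun h0 => hl (by rw [h0, mul_zero])
    obtain ⟨f, hf0, hfk, hfe⟩ := ih i l h1
    refine ⟨fun m => if m ≤ k then f m else j, by simpa using hf0, by simp, ?_⟩
    intro m hm
    rcases Nat.lt_or_ge m k with hmk | hmk
    · simpa [Nat.le_of_lt hmk, Nat.succ_le_of_lt hmk] using hfe m hmk
    · have : m = k := Nat.le_antisymm (Nat.lt_succ_iff.mp hm) hmk
      subst this
      simpa [hfk] using h2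

/-- A walk with nonzero edges gives a positive entry of the power. -/
lemma walk_pos {n : ℕ} (A : Matrix (Fin n) (Fin n) ℝ)
    (hpos : ∀ i j, 0 ≤ A i j) (f : ℕ → Fin n) :
    ∀ k, (∀ m < k, A (f m) (f (m + 1)) ≠ 0) → 0 < (A ^ k) (f 0) (f k) := by
  intro k
  induction k with
  | zero => intro _; simp [Matrix.one_apply]
  | succ k ih =>
    intro he
    have h1 : 0 < (A ^ k) (f 0) (f k) := ih fun m hm => he m (Nat.lt_succ_of_lt hm)
    have h2 : 0 < A (f k) (f (k + 1)) :=
      lt_of_le_of_ne (hpos _ _) (Ne.symm (he k (Nat.lt_succ_self k)))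
    rw [pow_succ, Matrix.mul_apply]
    refine Finset.sum_pos' (fun l _ => mul_nonneg (pow_entry_nonneg A hpos k _ l) (hpos l _)) ?_
    exact ⟨f k, Finset.mem_univ _, mul_pos h1 h2⟩

theorem stmt_2 (n : ℕ) (A : Matrix (Fin n) (Fin n) ℝ)
    (hpos : ∀ i j, 0 ≤ A i j)
    (hdiag : ∀ k ∈ Finset.Icc 1 n, ∀ i, (A ^ k) i i = 0) :
    IsNilpotent A ∧ A ^ n = 0 := by
  have hAn : A ^ n = 0 := by
    rcases Nat.eq_zero_or_pos n with rfl | hn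
    · exact Subsingleton.elim _ _
    ext i j
    by_contra h
    simp only [Matrix.zero_apply] at h
    obtain ⟨f, hf0, hfn, hfe⟩ := exists_walk A n i j h
    -- pigeonhole: f restricted to {0,…,n} cannot be injective
    obtain ⟨a, ha, b, hb, hab, hfab⟩ :=
      Finset.exists_ne_map_eq_of_card_lt_of_maps_to
        (s := Finset.range (n + 1)) (t := (Finset.univ : Finset (Fin n)))
        (by simp) (fun x _ => Finset.mem_univ (f x))
    simp only [Finset.mem_range, Nat.lt_succ_iff] at ha hb
    -- WLOG a < b
    wlog hlt : a < b generalizing a b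
    · exact this b a hab.symm hfab.symm hb ha (hab.lt_or_gt.resolve_left hlt)
    set k := b - a with hk
    have hk1 : 1 ≤ k := Nat.le_sub_of_add_le (by omega)
    have hkn : k ≤ n := by omega
    have hpos' : 0 < (A ^ k) (f a) (f (a + k)) := by
      apply walk_pos A hpos (fun m => f (a + m))
      intro m hm
      have heq : a + (m + 1) = a + m + 1 := by omega
      rw [heq]
      exact hfe (a + m) (by omega)
    have hak : a + k = b := by omega
    rw [hak, ← hfab] at hpos'
    exact absurd (hdiag k (Finset.mem_Icc.mpr ⟨hk1, hkn⟩) (f a)) (ne_of_gt hpos')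
  exact ⟨⟨n, hAn⟩, hAn⟩
end

section
/- Let A be an n×n real matrix with nonnegative entries, and suppose there exist ν, ε > 0 and a vector x ∈ ℝⁿ with all entries strictly positive such that x = A(x + ε𝟙) + νl, where l ∈ ℝⁿ has entries in {0,1} and l_i = 1 implies row i of A is zero and x_i = ν. Then for every i with l_i = 0 and row i of A nonzero, we have ∑_{j=1}^n A_{ij} A_{ji} < 1. -/
theorem stmt_5 (n : ℕ) (A : Matrix (Fin n) (Fin n) ℝ)
    (hpos : ∀ i j, 0 ≤ A i j) (ν ε : ℝ) (hν : 0 < ν) (hε : 0 < ε)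
    (x l : Fin n → ℝ) (hx : ∀ i, 0 < x i)
    (hl01 : ∀ i, l i = 0 ∨ l i = 1)
    (hleaf : ∀ i, l i = 1 → (∀ j, A i j = 0) ∧ x i = ν)
    (heq : x = A.mulVec (x + ε • (fun _ => (1 : ℝ))) + ν • l) :
    ∀ i, l i = 0 → (∃ j, A i j ≠ 0) → ∑ j, A i j * A j i < 1 := by
  intro i hli hj
  obtain ⟨j0, hj0⟩ := hj
  have hxeq : ∀ k, x k = ∑ j, A k j * (x j + ε) + ν * l k := by
    intro k
    have := congrFun heq k
    simpa [Matrix.mulVec, dotProduct, mul_add, Finset.sum_add_distrib, Finset.mul_sum, Pi.add_apply, Pi.smul_apply, smul_eq_mul] using this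
  have hνl : ∀ k, 0 ≤ ν * l k := by
    intro k
    rcases hl01 k with h | h <;> simp [h] <;> positivity
  -- key: x j ≥ A j i * (x i + ε)
  have hkey : ∀ j, A j i * (x i + ε) ≤ x j := by
    intro j
    rw [hxeq j]
    have h1 : A j i * (x i + ε) ≤ ∑ k, A j k * (x k + ε) := by
      apply Finset.single_le_sum (f := fun k => A j k * (x k + ε))
      · intro k _
        have := hx k
        have := hpos j k
        positivity
      · exact Finset.mem_univ i
    linarith [hνl j]
  set S := ∑ j, A i j * A j i with hS
  have hS0 : 0 ≤ S := Finset.sum_nonneg fun j _ => mul_nonneg (hpos i j) (hpos j i)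
  have hrow : 0 < ∑ j, A i j := by
    apply Finset.sum_pos' (fun j _ => hpos i j)
    exact ⟨j0, Finset.mem_univ j0, lt_of_le_of_ne (hpos i j0) (Ne.symm hj0)⟩
  have hlow : S * (x i + ε) + ε * ∑ j, A i j ≤ x i := by
    have h1 : ∑ j, A i j * (A j i * (x i + ε) + ε) ≤ ∑ j, A i j * (x j + ε) := by
      apply Finset.sum_le_sum
      intro j _
      have := hkey j
      have := hpos i j
      nlinarith
    have h2 : ∑ j, A i j * (A j i * (x i + ε) + ε)
        = S * (x i + ε) + ε * ∑ j, A i j := by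
      rw [hS, Finset.sum_mul, Finset.mul_sum]
      rw [← Finset.sum_add_distrib]
      apply Finset.sum_congr rfl
      intro j _
      ring
    have h3 := hxeq i
    rw [hli] at h3
    linarith [h2 ▸ h1]
  have hxi := hx i
  nlinarith
end

section
/- Let A be an n×n real matrix with nonnegative entries whose associated digraph is acyclic, let ν, ε > 0, and let l ∈ {0,1}ⁿ indicate the rows of A that are identically zero, with every zero row i having l_i = 1. Then the unique solution x of x = A x + εA𝟙 + νl satisfies x_i > 0 for all i. -/
def IsAcyclicDigraph {n : ℕ} (A : Matrix (Fin n) (Fin n) ℝ) : Prop :=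
  ¬ ∃ (m : ℕ) (f : ℕ → Fin n), 0 < m ∧ f m = f 0 ∧ ∀ k < m, 0 < A (f k) (f (k + 1))

theorem stmt_11 (n : ℕ) (A : Matrix (Fin n) (Fin n) ℝ)
    (hpos : ∀ i j, 0 ≤ A i j) (hacyc : IsAcyclicDigraph A)
    (ν ε : ℝ) (hν : 0 < ν) (hε : 0 < ε)
    (l : Fin n → ℝ) (hl01 : ∀ i, l i = 0 ∨ l i = 1)
    (hleaf : ∀ i, (∀ j, A i j = 0) ↔ l i = 1) :
    (∃! x : Fin n → ℝ,
      x = A.mulVec x + ε • A.mulVec (fun _ => (1 : ℝ)) + ν • l) ∧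
    ∀ x : Fin n → ℝ,
      x = A.mulVec x + ε • A.mulVec (fun _ => (1 : ℝ)) + ν • l → ∀ i, 0 < x i := by
  classical
  set R : Fin n → Fin n → Prop := fun j i => 0 < A i j with hR
  -- extract explicit paths from transitive closure
  have path : ∀ (j i : Fin n), Relation.TransGen R j i →
      ∃ (m : ℕ) (f : ℕ → Fin n), 0 < m ∧ f 0 = i ∧ f m = j ∧
        ∀ k < m, 0 < A (f k) (f (k + 1)) := by
    intro j i h
    induction h with
    | single h =>
        refine ⟨1, fun k => if k = 0 then _ else j, one_pos, rfl, rfl, ?_⟩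
        intro k hk
        interval_cases k
        simpa using h
    | tail hab step ih =>
        obtain ⟨m, f, hm, h0, hmj, hf⟩ := ih
        refine ⟨m + 1, fun k => if k = 0 then _ else f (k - 1), Nat.succ_pos _, rfl, ?_, ?_⟩
        · simp [hmj]
        · intro k hk
          rcases Nat.eq_zero_or_pos k with rfl | hk0
          · simpa [h0] using step
          · obtain ⟨k', rfl⟩ := Nat.exists_eq_succ_of_ne_zero hk0.ne'
            simpa using hf k' (by omega)
  have irr : Irreflexive (Relation.TransGen R) := by
    intro i h
    obtain ⟨m, f, hm, h0, hmj, hf⟩ := path i i h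
    exact hacyc ⟨m, f, hm, by rw [hmj, h0], hf⟩
  haveI : IsTrans (Fin n) (Relation.TransGen R) := ⟨fun _ _ _ => Relation.TransGen.trans⟩
  haveI : IsIrrefl (Fin n) (Relation.TransGen R) := ⟨irr⟩
  have wfT : WellFounded (Relation.TransGen R) :=
    Finite.wellFounded_of_trans_of_irrefl _
  have wf : WellFounded R :=
    Subrelation.wf (fun {a b} h => Relation.TransGen.single h) wfT
  have hzero : ∀ i j, ¬ R j i → A i j = 0 := by
    intro i j h
    exact le_antisymm (not_lt.mp h) (hpos i j)
  -- characterization of solutions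
  have key : ∀ (x : Fin n → ℝ) (i : Fin n),
      (A.mulVec x + ε • A.mulVec (fun _ => (1 : ℝ)) + ν • l) i
        = (∑ j, A i j * (x j + ε)) + ν * l i := by
    intro x i
    simp only [Pi.add_apply, Pi.smul_apply, smul_eq_mul, Matrix.mulVec, dotProduct, mul_one]
    have : ∑ j, A i j * (x j + ε) = (∑ j, A i j * x j) + ∑ j, ε * A i j := by
      rw [← Finset.sum_add_distrib]
      refine Finset.sum_congr rfl fun j _ => by ring
    rw [this, Finset.mul_sum]
  have hchar : ∀ x : Fin n → ℝ,
      (x = A.mulVec x + ε • A.mulVec (fun _ => (1 : ℝ)) + ν • l) ↔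
        ∀ i, x i = (∑ j, A i j * (x j + ε)) + ν * l i := by
    intro x
    constructor
    · intro h i
      conv_lhs => rw [h]
      exact key x i
    · intro h
      funext i
      rw [key x i]
      exact h i
  -- positivity for any solution
  have hposx : ∀ x : Fin n → ℝ,
      (∀ i, x i = (∑ j, A i j * (x j + ε)) + ν * l i) → ∀ i, 0 < x i := by
    intro x hx i
    refine wf.induction (C := fun i => 0 < x i) i ?_
    intro i ih
    rw [hx i]
    have hterm : ∀ j, 0 ≤ A i j * (x j + ε) := by
      intro j
      by_cases h : R j i
      · exact mul_nonneg (hpos i j) (le_of_lt (add_pos (ih j h) hε))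
      · rw [hzero i j h]; simp
    rcases hl01 i with h0 | h1
    · have hnall : ¬ ∀ j, A i j = 0 := by
        intro hall
        rw [(hleaf i).mp hall] at h0
        norm_num at h0
      push_neg at hnall
      obtain ⟨j0, hj0⟩ := hnall
      have hj0' : 0 < A i j0 := lt_of_le_of_ne (hpos i j0) (Ne.symm hj0)
      have hsum : 0 < ∑ j, A i j * (x j + ε) :=
        Finset.sum_pos' (fun j _ => hterm j)
          ⟨j0, Finset.mem_univ _, mul_pos hj0' (add_pos (ih j0 hj0') hε)⟩
      rw [h0]
      simpa using hsum
    · have hsum : 0 ≤ ∑ j, A i j * (x j + ε) := Finset.sum_nonneg fun j _ => hterm j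
      rw [h1, mul_one]
      linarith
  -- existence via well-founded recursion
  set F : (i : Fin n) → ((j : Fin n) → R j i → ℝ) → ℝ :=
    fun i rec => (∑ j, A i j * ((if h : R j i then rec j h else 0) + ε)) + ν * l i with hF
  set x : Fin n → ℝ := wf.fix F with hxdef
  have hx : ∀ i, x i = (∑ j, A i j * (x j + ε)) + ν * l i := by
    intro i
    have h1 : x i = F i (fun j _ => x j) := wf.fix_eq F i
    rw [h1, hF]
    beta_reduce
    congr 1
    refine Finset.sum_congr rfl fun j _ => ?_
    by_cases h : R j i
    · rw [dif_pos h]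
    · rw [dif_neg h, hzero i j h]
      ring
  -- uniqueness
  have huniq : ∀ x y : Fin n → ℝ,
      (∀ i, x i = (∑ j, A i j * (x j + ε)) + ν * l i) →
      (∀ i, y i = (∑ j, A i j * (y j + ε)) + ν * l i) → x = y := by
    intro x y hx hy
    funext i
    refine wf.induction (C := fun i => x i = y i) i ?_
    intro i ih
    rw [hx i, hy i]
    congr 1
    refine Finset.sum_congr rfl fun j _ => ?_
    by_cases h : R j i
    · rw [ih j h]
    · rw [hzero i j h]
      ring
  refine ⟨⟨x, (hchar x).mpr hx, ?_⟩, fun y hy i => hposx y ((hchar y).mp hy) i⟩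
  intro y hy
  exact huniq y x ((hchar y).mp hy) hx
end

section
/- Let A be an n×n real matrix with nonnegative entries, and suppose x ∈ ℝⁿ satisfies x = Ax + c where c ∈ ℝⁿ has strictly positive entries in every coordinate i for which row i of A is nonzero. If x_i > 0 for all i, then for each i with nonzero row, (1 - ∑_j A_{ij}A_{ji}) x_i equals a strictly positive quantity, and hence ∑_j A_{ij}A_{ji} < 1. -/
theorem stmt_12 (n : ℕ) (A : Matrix (Fin n) (Fin n) ℝ)
    (hpos : ∀ i j, 0 ≤ A i j) (x c : Fin n → ℝ)
    (heq : x = A.mulVec x + c)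
    (hc : ∀ i, (∃ j, A i j ≠ 0) → 0 < c i)
    (hx : ∀ i, 0 < x i) :
    ∀ i, (∃ j, A i j ≠ 0) →
      0 < (1 - ∑ j, A i j * A j i) * x i ∧ ∑ j, A i j * A j i < 1 := by
  have heq' : ∀ j, x j = ∑ k, A j k * x k + c j := by
    intro j
    have := congrFun heq j
    simpa [Matrix.mulVec, dotProduct] using this
  have hc' : ∀ j, 0 ≤ c j := by
    intro j
    by_cases h : ∃ k, A j k ≠ 0
    · exact (hc j h).le
    · push_neg at h
      have hxj := heq' j
      simp [h] at hxj
      linarith [hx j]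
  intro i hi
  have hstep : ∀ j, A j i * x i ≤ x j := by
    intro j
    have h1 : A j i * x i ≤ ∑ k, A j k * x k :=
      Finset.single_le_sum (f := fun k => A j k * x k)
        (fun k _ => mul_nonneg (hpos j k) (hx k).le) (Finset.mem_univ i)
    linarith [heq' j, hc' j]
  have hsum : ∑ j, A i j * (A j i * x i) ≤ ∑ j, A i j * x j :=
    Finset.sum_le_sum fun j _ => mul_le_mul_of_nonneg_left (hstep j) (hpos i j)
  have hrw : ∑ j, A i j * (A j i * x i) = (∑ j, A i j * A j i) * x i := by
    rw [Finset.sum_mul]; apply Finset.sum_congr rfl; intros; ring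
  have key : (∑ j, A i j * A j i) * x i + c i ≤ x i := by
    rw [← hrw]; linarith [heq' i, hsum]
  have hci := hc i hi
  have h1 : 0 < (1 - ∑ j, A i j * A j i) * x i := by
    have : (1 - ∑ j, A i j * A j i) * x i = x i - (∑ j, A i j * A j i) * x i := by ring
    linarith
  refine ⟨h1, ?_⟩
  nlinarith [hx i]
end
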